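/- Let G be a (P5, K5-e)-free graph containing a triangle on vertices v1, v2, v3, let Z be the set of vertices adjacent to all of v1, v2, v3, and for each i let Yi and Xi be as usual (vertices adjacent to exactly the triangle vertices other than vi, respectively adjacent only to vi). Fix i, let S be the vertex set of a component of the subgraph induced by Yi and R the vertex set of a component of the subgraph induced by Xi, and suppose some z ∈ Z has no neighbor in R. Then S is either complete to R or anticomplete to R. -/

import Mathlib

/-!
Every vertex `z ∈ Z` is anticomplete to `Yᵢ`: together with `vᵢ`, `y ∈ Yᵢ` and the other two
triangle vertices, an edge `zy` would induce `K₅ - e`. Since `z` also misses `R`, a non-edge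
between `S` and `R` next to an edge would extend to an induced `P₅` ending in `z`:
`y' y r vᵢ z` when adjacency to `r ∈ R` fails along an edge `yy'` of `S`, and
`r' r y vᵢ₊₁ z` when adjacency to `y ∈ S` fails along an edge `rr'` of `R`. So adjacency between
`S` and `R` is invariant along edges on both sides, and both components are connected.
-/

open SimpleGraph

/-- The complete graph on 5 vertices minus one edge. -/
def K5e : SimpleGraph (Fin 5) := (⊤ : SimpleGraph (Fin 5)).deleteEdges {s(0, 1)}

/-- `H` has an induced copy in `G`. -/
def HasInducedCopy {W V : Type*} (H : SimpleGraph W) (G : SimpleGraph V) : Prop :=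
  ∃ f : W ↪ V, ∀ a b : W, G.Adj (f a) (f b) ↔ H.Adj a b

/-- `G` contains no induced subgraph isomorphic to `H`. -/
def IsInducedFree {V W : Type*} (G : SimpleGraph V) (H : SimpleGraph W) : Prop :=
  ¬ HasInducedCopy H G

theorem hasInducedCopy_of_injective {W V : Type*} {H : SimpleGraph W} {G : SimpleGraph V}
    {f : W → V} (hf : Function.Injective f) (hadj : ∀ a b, G.Adj (f a) (f b) ↔ H.Adj a b) :
    HasInducedCopy H G :=
  ⟨⟨f, hf⟩, hadj⟩

section InducedCopies

variable {V : Type*} {G : SimpleGraph V} {a b c d e : V}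

theorem hasInducedCopy_pathGraph_five
    (hab : G.Adj a b) (hbc : G.Adj b c) (hcd : G.Adj c d) (hde : G.Adj d e)
    (hac : ¬G.Adj a c) (had : ¬G.Adj a d) (hae : ¬G.Adj a e)
    (hbd : ¬G.Adj b d) (hbe : ¬G.Adj b e) (hce : ¬G.Adj c e) :
    HasInducedCopy (pathGraph 5) G := by
  refine hasInducedCopy_of_injective (f := ![a, b, c, d, e]) (fun x y hxy => ?_) fun x y => ?_
  · fin_cases x <;> fin_cases y <;> simp at hxy ⊢ <;> subst hxy <;> simp_all [G.adj_comm]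
  · fin_cases x <;> fin_cases y <;> simp [pathGraph_adj, G.adj_comm, *]

theorem hasInducedCopy_K5e (hne : a ≠ b) (hab : ¬G.Adj a b)
    (hac : G.Adj a c) (had : G.Adj a d) (hae : G.Adj a e)
    (hbc : G.Adj b c) (hbd : G.Adj b d) (hbe : G.Adj b e)
    (hcd : G.Adj c d) (hce : G.Adj c e) (hde : G.Adj d e) :
    HasInducedCopy K5e G := by
  refine hasInducedCopy_of_injective (f := ![a, b, c, d, e]) (fun x y hxy => ?_) fun x y => ?_
  · fin_cases x <;> fin_cases y <;> simp at hxy ⊢ <;> subst hxy <;> simp_all [G.adj_comm]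
  · fin_cases x <;> fin_cases y <;> simp [K5e, G.adj_comm, *]

theorem IsInducedFree.adj_of_pathGraph_five (h : IsInducedFree G (pathGraph 5))
    (hab : G.Adj a b) (hbc : G.Adj b c) (hcd : G.Adj c d) (hde : G.Adj d e)
    (had : ¬G.Adj a d) (hae : ¬G.Adj a e)
    (hbd : ¬G.Adj b d) (hbe : ¬G.Adj b e) (hce : ¬G.Adj c e) :
    G.Adj a c := by
  by_contra hac
  exact h (hasInducedCopy_pathGraph_five hab hbc hcd hde hac had hae hbd hbe hce)

theorem IsInducedFree.not_adj_of_K5e (h : IsInducedFree G K5e) (hne : a ≠ b) (hab : ¬G.Adj a b)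
    (hac : G.Adj a c) (had : G.Adj a d) (hae : G.Adj a e)
    (hbc : G.Adj b c) (hbd : G.Adj b d)
    (hcd : G.Adj c d) (hce : G.Adj c e) (hde : G.Adj d e) :
    ¬G.Adj b e := fun hbe =>
  h (hasInducedCopy_K5e hne hab hac had hae hbc hbd hbe hcd hce hde)

end InducedCopies

namespace SimpleGraph.ConnectedComponent

variable {α β : Type*} {G : SimpleGraph α} {H : SimpleGraph β}

theorem imp_of_mem_supp {c : G.ConnectedComponent} {P : α → Prop}
    (h : ∀ a b, a ∈ c.supp → b ∈ c.supp → G.Adj a b → P a → P b)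
    {a b : α} (ha : a ∈ c.supp) (hb : b ∈ c.supp) (hPa : P a) : P b := by
  have hreach := (reachable_iff_reflTransGen a b).1 (c.reachable_of_mem_supp ha hb)
  suffices b ∈ c.supp ∧ P b from this.2
  clear hb
  induction hreach with
  | refl => exact ⟨ha, hPa⟩
  | tail _ hxy ih =>
    have hy := c.mem_supp_of_adj_mem_supp ih.1 hxy
    exact ⟨hy, h _ _ ih.1 hy hxy ih.2⟩

theorem forall_or_forall_not_of_adj (cA : G.ConnectedComponent) (cB : H.ConnectedComponent)
    (r : α → β → Prop)
    (hA : ∀ a a' b, a ∈ cA.supp → a' ∈ cA.supp → b ∈ cB.supp → G.Adj a a' → r a b → r a' b)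
    (hB : ∀ a b b', a ∈ cA.supp → b ∈ cB.supp → b' ∈ cB.supp → H.Adj b b' → r a b → r a b') :
    (∀ a ∈ cA.supp, ∀ b ∈ cB.supp, r a b) ∨ ∀ a ∈ cA.supp, ∀ b ∈ cB.supp, ¬r a b := by
  refine or_iff_not_imp_right.2 fun hex a ha b hb => ?_
  push Not at hex
  obtain ⟨a₀, ha₀, b₀, hb₀, hr₀⟩ := hex
  have hab₀ : r a b₀ :=
    imp_of_mem_supp (P := (r · b₀)) (fun _ _ hx hy => hA _ _ _ hx hy hb₀) ha₀ ha hr₀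
  exact imp_of_mem_supp (P := r a) (fun _ _ hx hy => hB _ _ _ ha hx hy) hb₀ hb hab₀

end SimpleGraph.ConnectedComponent

theorem stmt_16 {V : Type*} (G : SimpleGraph V)
    (hP5 : IsInducedFree G (pathGraph 5)) (hK5e : IsInducedFree G K5e)
    (v : Fin 3 → V) (hadj : ∀ i j, i ≠ j → G.Adj (v i) (v j))
    (X Y : Fin 3 → Set V) (Z : Set V)
    (hX : ∀ i, X i = {u | (∀ j, u ≠ v j) ∧ ∀ j, (G.Adj u (v j) ↔ j = i)})
    (hY : ∀ i, Y i = {u | (∀ j, u ≠ v j) ∧ ∀ j, (G.Adj u (v j) ↔ j ≠ i)})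
    (hZ : Z = {u | ∀ j, G.Adj u (v j)})
    (i : Fin 3)
    (cS : (G.induce (Y i)).ConnectedComponent)
    (cR : (G.induce (X i)).ConnectedComponent)
    (z : V) (hz : z ∈ Z) (hzR : ∀ r ∈ Subtype.val '' cR.supp, ¬ G.Adj z r) :
    (∀ s ∈ Subtype.val '' cS.supp, ∀ r ∈ Subtype.val '' cR.supp, G.Adj s r) ∨
    (∀ s ∈ Subtype.val '' cS.supp, ∀ r ∈ Subtype.val '' cR.supp, ¬ G.Adj s r) := by
  obtain ⟨hi1, hi2, h12⟩ : i + 1 ≠ i ∧ i + 2 ≠ i ∧ i + 1 ≠ i + 2 :=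
    (by decide : ∀ k : Fin 3, k + 1 ≠ k ∧ k + 2 ≠ k ∧ k + 1 ≠ k + 2) i
  have hzv : ∀ j, G.Adj (v j) z := fun j => by
    rw [hZ] at hz
    exact (hz j).symm
  have hXi : ∀ x ∈ X i, G.Adj x (v i) ∧ ¬G.Adj x (v (i + 1)) := fun x hx => by
    rw [hX] at hx
    exact ⟨(hx.2 i).2 rfl, fun h => hi1 ((hx.2 _).1 h)⟩
  have hYi : ∀ y ∈ Y i, y ≠ v i ∧ ¬G.Adj y (v i) ∧ G.Adj y (v (i + 1)) ∧ G.Adj y (v (i + 2)) :=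
    fun y hy => by
      rw [hY] at hy
      exact ⟨hy.1 i, fun h => (hy.2 i).1 h rfl, (hy.2 _).2 hi1, (hy.2 _).2 hi2⟩
  have hzY : ∀ y ∈ Y i, ¬G.Adj y z := fun y hy => by
    obtain ⟨hne, hnadj, hy1, hy2⟩ := hYi y hy
    exact hK5e.not_adj_of_K5e hne.symm (fun h => hnadj h.symm) (hadj _ _ hi1.symm)
      (hadj _ _ hi2.symm) (hzv i) hy1 hy2 (hadj _ _ h12) (hzv _) (hzv _)
  simp only [Set.forall_mem_image] at hzR ⊢
  refine ConnectedComponent.forall_or_forall_not_of_adj cS cR (fun s r => G.Adj s r) ?_ ?_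
  · rintro ⟨y, hy⟩ ⟨y', hy'⟩ ⟨r, hr⟩ - - hrR hyy' hyr
    exact hP5.adj_of_pathGraph_five (induce_adj.1 hyy').symm hyr (hXi r hr).1 (hzv i)
      (hYi y' hy').2.1 (hzY y' hy') (hYi y hy).2.1 (hzY y hy) fun h => hzR hrR h.symm
  · rintro ⟨y, hy⟩ ⟨r, hr⟩ ⟨r', hr'⟩ - hrR hr'R hrr' hyr
    exact (hP5.adj_of_pathGraph_five (induce_adj.1 hrr').symm hyr.symm (hYi y hy).2.2.1 (hzv _)
      (hXi r' hr').2 (fun h => hzR hr'R h.symm) (hXi r hr).2 (fun h => hzR hrR h.symm)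
      (hzY y hy)).symm
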